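/- Let A : [0,1] → (Hermitian N×N matrices) be a continuous path such that A₀ and A₁ are invertible. Then η(A₁) - η(A₀) = 2·SF(Aₜ), where η(B) = #{positive eigenvalues of B} - #{negative eigenvalues of B} is the signature and SF(Aₜ) denotes the spectral flow of the path, i.e. the net number of eigenvalues crossing zero. -/

import Mathlib

/-!
The number of eigenvalues of a Hermitian matrix below a level `ε` that is not one of its
eigenvalues is locally constant: if `‖C - B‖ < δ`, where `δ` is the distance from `ε` to the
spectrum of `B`, then the quadratic form of `C` stays below `ε` on the span of the eigenvectors
of `B` below `ε` and above `ε` on the span of those above, so by the min-max principle `C` has at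
least as many eigenvalues on either side as `B`. Hence on the `i`-th subinterval of the
partition the count below `εᵢ` is constant, the change in the count on `[0, εᵢ)` equals the
decrease of the number `n₋` of negative eigenvalues, the sum telescopes to
`n₋(A₀) - n₋(A₁)`, and `η = N - 2 n₋` for invertible matrices.
-/

open Matrix Finset

noncomputable def matrixSignature {N : ℕ} {B : Matrix (Fin N) (Fin N) ℂ}
    (hB : B.IsHermitian) : ℤ :=
  ((univ.filter fun j => 0 < hB.eigenvalues j).card : ℤ)
    - ((univ.filter fun j => hB.eigenvalues j < 0).card : ℤ)

open Module Topology
open scoped InnerProductSpace Matrix.Norms.L2Operator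

section Counting

variable {ι α : Type*} [Fintype ι] [LinearOrder α]

theorem card_filter_lt_add_card_filter_gt_le (f : ι → α) (a : α) :
    #{i | f i < a} + #{i | a < f i} ≤ Fintype.card ι := by
  classical
  rw [← card_union_of_disjoint (disjoint_filter.2 fun _ _ h h' => lt_asymm h h')]
  exact card_le_univ _

theorem card_filter_lt_add_card_filter_gt_eq (f : ι → α) {a : α} (h : ∀ i, f i ≠ a) :
    #{i | f i < a} + #{i | a < f i} = Fintype.card ι := by
  classical
  rw [← card_union_of_disjoint (disjoint_filter.2 fun _ _ h h' => lt_asymm h h'), ← filter_or,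
    filter_true_of_mem fun i _ => (h i).lt_or_gt, card_univ]

theorem card_filter_le_and_lt_add_card_filter_lt (f : ι → α) {a b : α} (hab : a ≤ b) :
    #{i | a ≤ f i ∧ f i < b} + #{i | f i < a} = #{i | f i < b} := by
  classical
  rw [← card_union_of_disjoint (disjoint_filter.2 fun _ _ h h' => (not_le.2 h') h.1),
    ← filter_or]
  exact congrArg card <| filter_congr fun i _ =>
    ⟨fun h => h.elim And.right (lt_of_lt_of_le · hab),
      fun h => (le_or_gt a (f i)).imp (⟨·, h⟩) id⟩

end Counting

theorem Fin.sum_castSucc_sub_succ {α : Type*} [AddCommGroup α] {m : ℕ}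
    (g : Fin (m + 1) → α) :
    ∑ i : Fin m, (g i.castSucc - g i.succ) = g 0 - g (Fin.last m) := by
  rw [sum_sub_distrib, sub_eq_sub_iff_add_eq_add, ← Fin.sum_univ_castSucc, ← Fin.sum_univ_succ]

namespace Module.Basis

variable {ι K V : Type*} [Field K] [AddCommGroup V] [Module K V]

theorem finrank_span_image_finset (b : Basis ι K V) (s : Finset ι) :
    finrank K (Submodule.span K (b '' s)) = #s := by
  rw [Set.image_eq_range]
  exact (finrank_span_eq_card (b.linearIndependent.comp _ Subtype.val_injective)).trans (by simp)

theorem finrank_le_card_of_forall_repr_eq_zero (b : Basis ι K V) (s : Finset ι)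
    (W : Submodule K V) (hW : ∀ x ∈ W, (∀ j ∈ s, b.repr x j = 0) → x = 0) :
    finrank K W ≤ #s := by
  let f : W →ₗ[K] (s → K) := (LinearMap.pi fun j : s => b.coord j).comp W.subtype
  have hf : Function.Injective f := by
    rw [← LinearMap.ker_eq_bot, Submodule.eq_bot_iff]
    exact fun x hx => Subtype.ext <| hW x x.2 fun j hj => congrFun hx ⟨j, hj⟩
  simpa using LinearMap.finrank_le_finrank_of_injective hf

end Module.Basis

namespace Matrix

variable {𝕜 : Type*} [RCLike 𝕜] {n : Type*} [Fintype n] [DecidableEq n]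

theorem abs_re_inner_toEuclideanLin_sub_le (B C : Matrix n n 𝕜) (x : EuclideanSpace 𝕜 n) :
    |RCLike.re ⟪x, toEuclideanLin C x⟫_𝕜 - RCLike.re ⟪x, toEuclideanLin B x⟫_𝕜|
      ≤ ‖C - B‖ * ‖x‖ ^ 2 := by
  rw [← map_sub, ← inner_sub_right, ← LinearMap.sub_apply, ← map_sub]
  calc _ ≤ ‖⟪x, toEuclideanLin (C - B) x⟫_𝕜‖ := RCLike.abs_re_le_norm _
    _ ≤ ‖x‖ * ‖toEuclideanLin (C - B) x‖ := norm_inner_le_norm _ _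
    _ ≤ ‖x‖ * (‖C - B‖ * ‖x‖) := by gcongr; exact (C - B).l2_opNorm_mulVec x
    _ = ‖C - B‖ * ‖x‖ ^ 2 := by ring

namespace IsHermitian

variable {B C : Matrix n n 𝕜}

theorem toEuclideanLin_eigenvectorBasis (hB : B.IsHermitian) (j : n) :
    toEuclideanLin B (hB.eigenvectorBasis j)
      = (hB.eigenvalues j : 𝕜) • hB.eigenvectorBasis j := by
  ext i
  simpa [toLpLin_apply, RCLike.real_smul_eq_coe_smul] using
    congrFun (hB.mulVec_eigenvectorBasis j) i

theorem eigenvectorBasis_repr_toEuclideanLin (hB : B.IsHermitian) (x : EuclideanSpace 𝕜 n)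
    (j : n) :
    hB.eigenvectorBasis.repr (toEuclideanLin B x) j
      = hB.eigenvalues j * hB.eigenvectorBasis.repr x j := by
  rw [OrthonormalBasis.repr_apply_apply, OrthonormalBasis.repr_apply_apply,
    ← isSymmetric_toEuclideanLin_iff.mpr hB, toEuclideanLin_eigenvectorBasis, inner_smul_left,
    RCLike.conj_ofReal]

theorem re_inner_toEuclideanLin (hB : B.IsHermitian) (x : EuclideanSpace 𝕜 n) :
    RCLike.re ⟪x, toEuclideanLin B x⟫_𝕜
      = ∑ j, hB.eigenvalues j * ‖hB.eigenvectorBasis.repr x j‖ ^ 2 := by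
  rw [← hB.eigenvectorBasis.repr.inner_map_map, PiLp.inner_apply, map_sum]
  refine sum_congr rfl fun j _ => ?_
  rw [eigenvectorBasis_repr_toEuclideanLin, RCLike.inner_apply, mul_assoc, RCLike.mul_conj,
    ← RCLike.ofReal_pow, ← RCLike.ofReal_mul, RCLike.ofReal_re]

theorem re_inner_toEuclideanLin_sub_mul_norm_sq (hB : B.IsHermitian) (x : EuclideanSpace 𝕜 n)
    (μ : ℝ) :
    RCLike.re ⟪x, toEuclideanLin B x⟫_𝕜 - μ * ‖x‖ ^ 2
      = ∑ j, (hB.eigenvalues j - μ) * ‖hB.eigenvectorBasis.repr x j‖ ^ 2 := by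
  rw [re_inner_toEuclideanLin hB, ← hB.eigenvectorBasis.repr.norm_map, EuclideanSpace.norm_sq_eq,
    mul_sum, ← sum_sub_distrib]
  simp only [sub_mul]

theorem re_inner_toEuclideanLin_le (hB : B.IsHermitian) {x : EuclideanSpace 𝕜 n} {μ : ℝ}
    (hx : ∀ j, hB.eigenvectorBasis.repr x j ≠ 0 → hB.eigenvalues j ≤ μ) :
    RCLike.re ⟪x, toEuclideanLin B x⟫_𝕜 ≤ μ * ‖x‖ ^ 2 := by
  rw [← sub_nonpos, re_inner_toEuclideanLin_sub_mul_norm_sq hB]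
  refine sum_nonpos fun j _ => ?_
  by_cases hj : hB.eigenvectorBasis.repr x j = 0
  · simp [hj]
  · exact mul_nonpos_of_nonpos_of_nonneg (sub_nonpos.2 (hx j hj)) (by positivity)

theorem le_re_inner_toEuclideanLin (hB : B.IsHermitian) {x : EuclideanSpace 𝕜 n} {μ : ℝ}
    (hx : ∀ j, hB.eigenvectorBasis.repr x j ≠ 0 → μ ≤ hB.eigenvalues j) :
    μ * ‖x‖ ^ 2 ≤ RCLike.re ⟪x, toEuclideanLin B x⟫_𝕜 := by
  rw [← sub_nonneg, re_inner_toEuclideanLin_sub_mul_norm_sq hB]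
  refine sum_nonneg fun j _ => ?_
  by_cases hj : hB.eigenvectorBasis.repr x j = 0
  · simp [hj]
  · exact mul_nonneg (sub_nonneg.2 (hx j hj)) (by positivity)

theorem card_eigenvalues_lt_le_of_norm_sub_lt (hB : B.IsHermitian) (hC : C.IsHermitian)
    {ε δ : ℝ} (hgap : ∀ j, δ ≤ |hB.eigenvalues j - ε|) (hCB : ‖C - B‖ < δ) :
    #{j | hB.eigenvalues j < ε} ≤ #{j | hC.eigenvalues j < ε} := by
  rw [← hB.eigenvectorBasis.toBasis.finrank_span_image_finset]
  refine hC.eigenvectorBasis.toBasis.finrank_le_card_of_forall_repr_eq_zero _ _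
    fun x hxB hxC => ?_
  rw [Basis.mem_span_image] at hxB
  simp only [OrthonormalBasis.coe_toBasis_repr_apply, mem_filter, mem_univ, true_and] at hxC
  have hqB : RCLike.re ⟪x, toEuclideanLin B x⟫_𝕜 ≤ (ε - δ) * ‖x‖ ^ 2 := by
    refine re_inner_toEuclideanLin_le hB fun j hj => ?_
    have hj : hB.eigenvalues j < ε := by simpa using hxB (Finsupp.mem_support_iff.2 hj)
    have := hgap j
    rw [abs_of_neg (sub_neg.2 hj)] at this
    linarith
  have hqC : ε * ‖x‖ ^ 2 ≤ RCLike.re ⟪x, toEuclideanLin C x⟫_𝕜 :=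
    le_re_inner_toEuclideanLin hC fun j hj => not_lt.1 fun h => hj (hxC j h)
  have hqCB := (abs_le.1 (abs_re_inner_toEuclideanLin_sub_le B C x)).2
  by_contra hx
  have : 0 < ‖x‖ ^ 2 := by positivity
  nlinarith

theorem card_lt_eigenvalues_le_of_norm_sub_lt (hB : B.IsHermitian) (hC : C.IsHermitian)
    {ε δ : ℝ} (hgap : ∀ j, δ ≤ |hB.eigenvalues j - ε|) (hCB : ‖C - B‖ < δ) :
    #{j | ε < hB.eigenvalues j} ≤ #{j | ε < hC.eigenvalues j} := by
  rw [← hB.eigenvectorBasis.toBasis.finrank_span_image_finset]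
  refine hC.eigenvectorBasis.toBasis.finrank_le_card_of_forall_repr_eq_zero _ _
    fun x hxB hxC => ?_
  rw [Basis.mem_span_image] at hxB
  simp only [OrthonormalBasis.coe_toBasis_repr_apply, mem_filter, mem_univ, true_and] at hxC
  have hqB : (ε + δ) * ‖x‖ ^ 2 ≤ RCLike.re ⟪x, toEuclideanLin B x⟫_𝕜 := by
    refine le_re_inner_toEuclideanLin hB fun j hj => ?_
    have hj : ε < hB.eigenvalues j := by simpa using hxB (Finsupp.mem_support_iff.2 hj)
    have := hgap j
    rw [abs_of_pos (sub_pos.2 hj)] at this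
    linarith
  have hqC : RCLike.re ⟪x, toEuclideanLin C x⟫_𝕜 ≤ ε * ‖x‖ ^ 2 :=
    re_inner_toEuclideanLin_le hC fun j hj => not_lt.1 fun h => hj (hxC j h)
  have hqCB := (abs_le.1 (abs_re_inner_toEuclideanLin_sub_le B C x)).1
  by_contra hx
  have : 0 < ‖x‖ ^ 2 := by positivity
  nlinarith

theorem card_eigenvalues_lt_eq_of_norm_sub_lt (hB : B.IsHermitian) (hC : C.IsHermitian)
    {ε δ : ℝ} (hgap : ∀ j, δ ≤ |hB.eigenvalues j - ε|) (hCB : ‖C - B‖ < δ) :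
    #{j | hC.eigenvalues j < ε} = #{j | hB.eigenvalues j < ε} := by
  have hBε : ∀ j, hB.eigenvalues j ≠ ε := fun j h => by
    have := hgap j
    rw [h, sub_self, abs_zero] at this
    linarith [norm_nonneg (C - B)]
  have hlt := card_eigenvalues_lt_le_of_norm_sub_lt hB hC hgap hCB
  have hgt := card_lt_eigenvalues_le_of_norm_sub_lt hB hC hgap hCB
  have hB_card := card_filter_lt_add_card_filter_gt_eq hB.eigenvalues hBε
  have hC_card := card_filter_lt_add_card_filter_gt_le hC.eigenvalues ε
  omega

theorem eventually_card_eigenvalues_lt_eq (hB : B.IsHermitian) {ε : ℝ}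
    (hε : ∀ j, hB.eigenvalues j ≠ ε) :
    ∀ᶠ C in 𝓝 B, ∀ hC : C.IsHermitian,
      #{j | hC.eigenvalues j < ε} = #{j | hB.eigenvalues j < ε} := by
  obtain ⟨δ, hδ, hgap⟩ : ∃ δ > 0, ∀ j, δ ≤ |hB.eigenvalues j - ε| := by
    cases isEmpty_or_nonempty n
    · exact ⟨1, one_pos, isEmptyElim⟩
    · obtain ⟨j₀, hj₀⟩ := Finite.exists_min fun j => |hB.eigenvalues j - ε|
      exact ⟨_, abs_pos.2 (sub_ne_zero.2 (hε j₀)), hj₀⟩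
  filter_upwards [Metric.ball_mem_nhds B hδ] with C hCB hC
  exact card_eigenvalues_lt_eq_of_norm_sub_lt hB hC hgap (dist_eq_norm C B ▸ hCB)

theorem card_eigenvalues_lt_eq_of_isPreconnected {X : Type*} [TopologicalSpace X]
    {A : X → Matrix n n 𝕜} (hA : ∀ s, (A s).IsHermitian) {S : Set X} (hS : IsPreconnected S)
    (hcont : ContinuousOn A S) {ε : ℝ} (hε : ∀ s ∈ S, ∀ j, (hA s).eigenvalues j ≠ ε)
    {x y : X} (hx : x ∈ S) (hy : y ∈ S) :
    #{j | (hA x).eigenvalues j < ε} = #{j | (hA y).eigenvalues j < ε} := by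
  refine hS.constant (f := fun s => #{j | (hA s).eigenvalues j < ε}) (fun s hs => ?_) hx hy
  rw [ContinuousWithinAt, nhds_discrete, Filter.tendsto_pure]
  filter_upwards [hcont s hs (eventually_card_eigenvalues_lt_eq (hA s) (hε s hs))] with s' hs'
  exact hs' (hA s')

theorem eigenvalues_ne_zero_of_isUnit (hB : B.IsHermitian) (h : IsUnit B) (j : n) :
    hB.eigenvalues j ≠ 0 := by
  have hdet := ((isUnit_iff_isUnit_det B).1 h).ne_zero
  rw [hB.det_eq_prod_eigenvalues, prod_ne_zero_iff] at hdet
  exact_mod_cast hdet j (mem_univ j)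

end IsHermitian

end Matrix

theorem matrixSignature_eq_of_isUnit {N : ℕ} {B : Matrix (Fin N) (Fin N) ℂ} (hB : B.IsHermitian)
    (h : IsUnit B) : matrixSignature hB = N - 2 * #{j | hB.eigenvalues j < 0} := by
  have := card_filter_lt_add_card_filter_gt_eq hB.eigenvalues (hB.eigenvalues_ne_zero_of_isUnit h)
  rw [Fintype.card_fin] at this
  unfold matrixSignature
  omega

/-- The sum on the right is Phillips' formula for the spectral flow of `A`, relative to the
partition `t` and the levels `ε`. -/
theorem eta_difference_eq_two_spectral_flow (N : ℕ)
    (A : ℝ → Matrix (Fin N) (Fin N) ℂ) (hA : ∀ s, (A s).IsHermitian)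
    (hcont : Continuous A) (h0 : IsUnit (A 0)) (h1 : IsUnit (A 1))
    (m : ℕ) (t : Fin (m + 1) → ℝ) (ht : Monotone t)
    (ht0 : t 0 = 0) (ht1 : t (Fin.last m) = 1)
    (ε : Fin m → ℝ) (hε : ∀ i, 0 < ε i)
    (hgap : ∀ i : Fin m, ∀ s ∈ Set.Icc (t i.castSucc) (t i.succ), ∀ j,
      (hA s).eigenvalues j ≠ ε i ∧ (hA s).eigenvalues j ≠ -(ε i)) :
    matrixSignature (hA 1) - matrixSignature (hA 0)
      = 2 * ∑ i : Fin m,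
          (((univ.filter fun j =>
              0 ≤ (hA (t i.succ)).eigenvalues j ∧ (hA (t i.succ)).eigenvalues j < ε i).card : ℤ)
            - ((univ.filter fun j =>
              0 ≤ (hA (t i.castSucc)).eigenvalues j ∧
                (hA (t i.castSucc)).eigenvalues j < ε i).card : ℤ)) := by
  set negCount : Fin (m + 1) → ℤ := fun k => #{j | (hA (t k)).eigenvalues j < 0}
  have hstep : ∀ i : Fin m,
      (#{j | 0 ≤ (hA (t i.succ)).eigenvalues j ∧ (hA (t i.succ)).eigenvalues j < ε i} : ℤ)
        - #{j | 0 ≤ (hA (t i.castSucc)).eigenvalues j ∧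
            (hA (t i.castSucc)).eigenvalues j < ε i}
      = negCount i.castSucc - negCount i.succ := by
    intro i
    have hle : t i.castSucc ≤ t i.succ := ht (Fin.castSucc_le_succ i)
    have hconst := Matrix.IsHermitian.card_eigenvalues_lt_eq_of_isPreconnected hA
      isPreconnected_Icc hcont.continuousOn (fun s hs j => (hgap i s hs j).1)
      (Set.left_mem_Icc.2 hle) (Set.right_mem_Icc.2 hle)
    have hsucc := card_filter_le_and_lt_add_card_filter_lt (hA (t i.succ)).eigenvalues (hε i).le
    have hcast :=
      card_filter_le_and_lt_add_card_filter_lt (hA (t i.castSucc)).eigenvalues (hε i).le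
    simp only [negCount]
    omega
  rw [sum_congr rfl fun i _ => hstep i, Fin.sum_castSucc_sub_succ,
    matrixSignature_eq_of_isUnit (hA 0) h0, matrixSignature_eq_of_isUnit (hA 1) h1]
  simp only [negCount, ht0, ht1]
  ring
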